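/- Fix an integer n > 2 and let 𝒰 ⊆ [0,1]^n be the set of u for which the equation v = f(u,v) has a unique solution v(u) on [v₀(u), +∞). Then for all u, u' ∈ 𝒰: |v(u) − v(u')| ≤ (8/n) · Σ_{i=1}^n |u_i − u'_i|. -/

import Mathlib

open Finset
open scoped Classical

/-- `δ_i(u,v) = v + (4(n−1)/n²)(1 − 2u_i)`. -/
noncomputable def deltaFP (n : ℕ) (u : Fin n → ℝ) (v : ℝ) (i : Fin n) : ℝ :=
  v + 4 * ((n : ℝ) - 1) / (n : ℝ) ^ 2 * (1 - 2 * u i)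

/-- `v₀(u) = max( (4(n−1)/n²)·max_i(2u_i − 1), 0 )`. -/
noncomputable def v0FP (n : ℕ) (u : Fin n → ℝ) : ℝ :=
  max (4 * ((n : ℝ) - 1) / (n : ℝ) ^ 2 * (⨆ i, (2 * u i - 1))) 0

/-- `f(u,v) = ( (1/(n−2)) Σ_i √(δ_i(u,v)) )²`. -/
noncomputable def fFP (n : ℕ) (u : Fin n → ℝ) (v : ℝ) : ℝ :=
  ((1 / ((n : ℝ) - 2)) * ∑ i, Real.sqrt (deltaFP n u v i)) ^ 2

/-- `g_i(u,v) = 1/2 + (n/4)(√(δ_i(u,v)) − √v)`. -/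
noncomputable def gFP (n : ℕ) (u : Fin n → ℝ) (v : ℝ) (i : Fin n) : ℝ :=
  1 / 2 + (n : ℝ) / 4 * (Real.sqrt (deltaFP n u v i) - Real.sqrt v)

/-- `v₁(u) = (2/n) Σ_i (2u_i − 1)`. -/
noncomputable def v1FP (n : ℕ) (u : Fin n → ℝ) : ℝ :=
  (2 / (n : ℝ)) * ∑ i, (2 * u i - 1)

/-!
On `[v₀(u), ∞)` the fixed points of `f(u, ·)` are the zeros of
`G_u(w) = ∑ √δᵢ(u,w) − (n − 2)√w`. Since `G_u > 0` for `w > 1`, uniqueness and the intermediate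
value theorem force `G_u > 0` on `(v(u), ∞)`. On the other hand, with `c = 4(n − 1)/n²` and
`w = v(u) − 2c‖u − u'‖₁`, Minkowski's inequality in the plane, applied to the vectors
`(√δᵢ(u',w), √εᵢ)` of length at most `√δᵢ(u,v(u))` where `∑ √εᵢ ≥ (n − 2)√(v(u) − w)`,
gives `G_{u'}(w) ≤ 0`. Hence `v(u) − v(u') ≤ 2c‖u − u'‖₁ ≤ (8/n)‖u − u'‖₁`, and symmetrically.
-/

theorem sq_sum_add_sq_sum_le_sq_sum_sqrt {ι : Type*} (s : Finset ι) (p q : ι → ℝ) :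
    (∑ i ∈ s, p i) ^ 2 + (∑ i ∈ s, q i) ^ 2 ≤ (∑ i ∈ s, √(p i ^ 2 + q i ^ 2)) ^ 2 := by
  have h := norm_sum_le s fun i => (⟨p i, q i⟩ : ℂ)
  simp only [Complex.norm_eq_sqrt_sq_add_sq, Complex.re_sum, Complex.im_sum] at h
  rw [← Real.sqrt_le_left (Finset.sum_nonneg fun i _ => Real.sqrt_nonneg _)]
  exact h

theorem sum_le_sqrt_mul_sum_sqrt {ι : Type*} (s : Finset ι) {x : ι → ℝ} {t : ℝ}
    (hx : ∀ i ∈ s, 0 ≤ x i) (hxt : ∀ i ∈ s, x i ≤ t) :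
    ∑ i ∈ s, x i ≤ √t * ∑ i ∈ s, √(x i) := by
  rw [Finset.mul_sum]
  refine Finset.sum_le_sum fun i hi => ?_
  calc x i = √(x i) * √(x i) := (Real.mul_self_sqrt (hx i hi)).symm
    _ ≤ √t * √(x i) := by gcongr; exact hxt i hi

theorem sq_mul_le_sq_sum_sqrt {ι : Type*} (s : Finset ι) {x : ι → ℝ} {m t : ℝ} (hm : 0 ≤ m)
    (hx : ∀ i ∈ s, 0 ≤ x i) (hxt : ∀ i ∈ s, x i ≤ t) (hsum : m * t ≤ ∑ i ∈ s, x i) :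
    m ^ 2 * t ≤ (∑ i ∈ s, √(x i)) ^ 2 := by
  have hsum_sqrt := hsum.trans (sum_le_sqrt_mul_sum_sqrt s hx hxt)
  rcases le_or_gt t 0 with ht | ht
  · nlinarith [sq_nonneg (∑ i ∈ s, √(x i))]
  have hrt := Real.sqrt_pos.2 ht
  have hle : m * √t ≤ ∑ i ∈ s, √(x i) := by
    have h : m * √t * √t ≤ (∑ i ∈ s, √(x i)) * √t := by
      rw [mul_assoc, Real.mul_self_sqrt ht.le]; linarith
    exact le_of_mul_le_mul_right h hrt
  calc m ^ 2 * t = (m * √t) ^ 2 := by rw [mul_pow, Real.sq_sqrt ht.le]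
    _ ≤ _ := pow_le_pow_left₀ (by positivity) hle 2

theorem sum_sqrt_add_le_of_sum_sqrt_add_eq {ι : Type*} [Fintype ι] {a b : ι → ℝ} {m v w : ℝ}
    (hm : 0 ≤ m) (hmι : m + 1 ≤ Fintype.card ι) (hw : 0 ≤ w) (hb : ∀ i, 0 ≤ w + b i)
    (hwv : w + ∑ i, |a i - b i| ≤ v) (hfix : ∑ i, √(v + a i) = m * √v) :
    ∑ i, √(w + b i) ≤ m * √w := by
  have hdist : ∀ i, |a i - b i| ≤ ∑ j, |a j - b j| := fun i =>
    Finset.single_le_sum (fun j _ => abs_nonneg (a j - b j)) (Finset.mem_univ i)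
  have ht : 0 ≤ v - w := by
    linarith [Finset.sum_nonneg fun j (_ : j ∈ Finset.univ) => abs_nonneg (a j - b j)]
  -- `εᵢ` is chosen so that the plane vector `(√(w + bᵢ), √εᵢ)` has length at most `√(v + aᵢ)`
  set ε : ι → ℝ := fun i => v - w - |a i - b i| with hε_def
  have hε : ∀ i, 0 ≤ ε i := fun i => by rw [hε_def]; linarith [hdist i]
  have hεt : ∀ i, ε i ≤ v - w := fun i => by rw [hε_def]; linarith [abs_nonneg (a i - b i)]
  have hε_sum : m * (v - w) ≤ ∑ i, ε i := by
    rw [hε_def, Finset.sum_sub_distrib, Finset.sum_const, Finset.card_univ, nsmul_eq_mul]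
    nlinarith [mul_le_mul_of_nonneg_right hmι ht]
  have hε_sq := sq_mul_le_sq_sum_sqrt Finset.univ hm (fun i _ => hε i) (fun i _ => hεt i) hε_sum
  have hterm : ∀ i, √(√(w + b i) ^ 2 + √(ε i) ^ 2) ≤ √(v + a i) := fun i => by
    rw [Real.sq_sqrt (hb i), Real.sq_sqrt (hε i)]
    exact Real.sqrt_le_sqrt (by simp only [hε_def]; linarith [neg_abs_le (a i - b i)])
  have hsq : (∑ i, √(w + b i)) ^ 2 ≤ (m * √w) ^ 2 := by
    have hminkowski := sq_sum_add_sq_sum_le_sq_sum_sqrt Finset.univ (fun i => √(w + b i))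
      fun i => √(ε i)
    have := pow_le_pow_left₀ (Finset.sum_nonneg fun i _ => Real.sqrt_nonneg _)
      (Finset.sum_le_sum fun i (_ : i ∈ Finset.univ) => hterm i) 2
    rw [hfix, mul_pow, Real.sq_sqrt (by linarith)] at this
    rw [mul_pow, Real.sq_sqrt hw]
    nlinarith
  exact le_of_sq_le_sq hsq (by positivity)

section FixedPoint

variable {n : ℕ} {u : Fin n → ℝ}

theorem deltaFP_nonneg {v : ℝ} (hv : v0FP n u ≤ v) (i : Fin n) : 0 ≤ deltaFP n u v i := by
  have hn : (1 : ℝ) ≤ n := by exact_mod_cast i.pos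
  have hc : 0 ≤ 4 * ((n : ℝ) - 1) / (n : ℝ) ^ 2 := by positivity
  have hmax : 2 * u i - 1 ≤ ⨆ j, (2 * u j - 1) :=
    le_ciSup (Set.finite_range fun j => 2 * u j - 1).bddAbove i
  have := (mul_le_mul_of_nonneg_left hmax hc).trans ((le_max_left _ _).trans hv)
  rw [deltaFP]
  linarith

theorem fFP_eq_self_iff (hn : 2 < n) {v : ℝ} (hv : 0 ≤ v) :
    fFP n u v = v ↔ ∑ i, √(deltaFP n u v i) = ((n : ℝ) - 2) * √v := by
  have hn' : (0 : ℝ) < n - 2 := by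
    have : (2 : ℝ) < n := by exact_mod_cast hn
    linarith
  have hsum : 0 ≤ 1 / ((n : ℝ) - 2) * ∑ i, √(deltaFP n u v i) := by positivity
  rw [fFP]
  constructor
  · intro h
    have hsqrt := Real.sqrt_sq hsum
    rw [h] at hsqrt
    rw [hsqrt]
    field_simp
  · intro h
    rw [h]
    field_simp
    exact Real.sq_sqrt hv

theorem mul_sqrt_lt_sum_sqrt_deltaFP (hn : 2 < n) (hu : ∀ i, u i ≤ 1) {w : ℝ} (hw : 1 < w) :
    ((n : ℝ) - 2) * √w < ∑ i, √(deltaFP n u w i) := by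
  have hn' : (2 : ℝ) < n := by exact_mod_cast hn
  set c := 4 * ((n : ℝ) - 1) / (n : ℝ) ^ 2 with hc
  have hnc : (n : ℝ) ^ 2 * c = 4 * (n - 1) := by rw [hc]; field_simp
  have hcw : 0 ≤ w - c := by nlinarith
  -- `(n - 2)² = n² - 4(n - 1)`, so squaring reduces this to `w > 1`
  have hlt : ((n : ℝ) - 2) * √w < n * √(w - c) := by
    refine lt_of_pow_lt_pow_left₀ 2 (by positivity) ?_
    rw [mul_pow, mul_pow, Real.sq_sqrt (by linarith), Real.sq_sqrt hcw]
    nlinarith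
  calc ((n : ℝ) - 2) * √w < n * √(w - c) := hlt
    _ = ∑ _i : Fin n, √(w - c) := by simp
    _ ≤ ∑ i, √(deltaFP n u w i) := by
      gcongr with i
      have hc0 : 0 ≤ c := div_nonneg (by linarith) (by positivity)
      rw [deltaFP, ← hc]
      nlinarith [hu i]

theorem mul_sqrt_lt_sum_sqrt_deltaFP_of_fixedPoint_lt (hn : 2 < n) (hu : ∀ i, u i ≤ 1)
    (huniq : ∃! v, v ∈ Set.Ici (v0FP n u) ∧ fFP n u v = v) {v w : ℝ}
    (hv : v ∈ Set.Ici (v0FP n u) ∧ fFP n u v = v) (hvw : v < w) :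
    ((n : ℝ) - 2) * √w < ∑ i, √(deltaFP n u w i) := by
  have hv0 : 0 ≤ v := (le_max_right _ _).trans hv.1
  set G : ℝ → ℝ := fun ω => ∑ i, √(deltaFP n u ω i) - ((n : ℝ) - 2) * √ω
  have hG : Continuous G := by simp only [G, deltaFP]; fun_prop
  by_contra! hle
  have hGw : G w ≤ 0 := sub_nonpos.2 hle
  have hGw1 : 0 < G (w + 1) :=
    sub_pos.2 (mul_sqrt_lt_sum_sqrt_deltaFP hn hu (by linarith))
  obtain ⟨z, ⟨hwz, -⟩, hGz⟩ :=
    intermediate_value_Icc (by linarith) hG.continuousOn ⟨hGw, hGw1.le⟩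
  have hz : z ∈ Set.Ici (v0FP n u) := le_trans hv.1 (by linarith : v ≤ z)
  have hfix : fFP n u z = z := (fFP_eq_self_iff hn (by linarith)).2 (sub_eq_zero.1 hGz)
  have hzv : z = v := huniq.unique ⟨hz, hfix⟩ hv
  linarith

theorem fixedPoint_sub_le (hn : 2 < n) {u' : Fin n → ℝ} (hu' : ∀ i, u' i ≤ 1)
    (huniq' : ∃! v, v ∈ Set.Ici (v0FP n u') ∧ fFP n u' v = v) {v v' : ℝ}
    (hv : fFP n u v = v) (hv' : v' ∈ Set.Ici (v0FP n u') ∧ fFP n u' v' = v') :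
    v - v' ≤ 8 / (n : ℝ) * ∑ i, |u i - u' i| := by
  have hn' : (2 : ℝ) < n := by exact_mod_cast hn
  set c := 4 * ((n : ℝ) - 1) / (n : ℝ) ^ 2 with hc
  set E := ∑ i, |u i - u' i|
  have hE : 0 ≤ E := Finset.sum_nonneg fun i _ => abs_nonneg _
  have hc0 : 0 ≤ c := div_nonneg (by linarith) (by positivity)
  have h2c : 2 * c ≤ 8 / n := by
    rw [hc, ← mul_div_assoc, div_le_div_iff₀ (by positivity) (by positivity)]
    nlinarith
  have hdist : ∑ i, |c * (1 - 2 * u i) - c * (1 - 2 * u' i)| = 2 * c * E := by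
    rw [Finset.mul_sum]
    refine Finset.sum_congr rfl fun i _ => ?_
    rw [show c * (1 - 2 * u i) - c * (1 - 2 * u' i) = 2 * c * (u' i - u i) by ring,
      abs_mul, abs_of_nonneg (by positivity), abs_sub_comm]
  by_contra! hlt
  set w := v - 2 * c * E with hw_def
  have hv'w : v' < w := by nlinarith
  have hw : v0FP n u' ≤ w := hv'.1.trans hv'w.le
  have hfix := (fFP_eq_self_iff hn (hv ▸ sq_nonneg _)).1 hv
  have hle : ∑ i, √(deltaFP n u' w i) ≤ ((n : ℝ) - 2) * √w :=
    sum_sqrt_add_le_of_sum_sqrt_add_eq (a := fun i => c * (1 - 2 * u i)) (by linarith)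
      (by simp only [Fintype.card_fin]; linarith) ((le_max_right _ _).trans hw)
      (deltaFP_nonneg hw) (by rw [hdist, hw_def, sub_add_cancel]) hfix
  exact (mul_sqrt_lt_sum_sqrt_deltaFP_of_fixedPoint_lt hn hu' huniq' hv' hv'w).not_ge hle

end FixedPoint

/-- on the set `𝒰` of `u ∈ [0,1]^n` for which `v = f(u,v)` has a unique
solution `v(u)` on `[v₀(u), +∞)`, the map `u ↦ v(u)` is Lipschitz for the ℓ₁-norm:
`|v(u) − v(u')| ≤ (8/n) Σ_i |u_i − u'_i|`. -/
theorem fixed_point_lipschitz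
    (n : ℕ) (hn : 2 < n)
    (u u' : Fin n → ℝ) (hu : ∀ i, u i ∈ Set.Icc (0 : ℝ) 1)
    (hu' : ∀ i, u' i ∈ Set.Icc (0 : ℝ) 1)
    (huniq : ∃! v, v ∈ Set.Ici (v0FP n u) ∧ fFP n u v = v)
    (huniq' : ∃! v, v ∈ Set.Ici (v0FP n u') ∧ fFP n u' v = v)
    (v v' : ℝ)
    (hv : v ∈ Set.Ici (v0FP n u) ∧ fFP n u v = v)
    (hv' : v' ∈ Set.Ici (v0FP n u') ∧ fFP n u' v' = v') :
    |v - v'| ≤ (8 / (n : ℝ)) * ∑ i, |u i - u' i| := by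
  rw [abs_sub_le_iff]
  constructor
  · exact fixedPoint_sub_le hn (fun i => (hu' i).2) huniq' hv.2 hv'
  · simpa only [abs_sub_comm (u' _)] using
      fixedPoint_sub_le hn (fun i => (hu i).2) huniq hv'.2 hv
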